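/- Let H_i and H_f be Hermitian operators on a finite-dimensional complex inner product space, H(λ) = (1 − λ) H_i + λ H_f, and let ψ be a unit eigenvector of H(λ). Let σ_D = sqrt(⟨ψ, (H_f − H_i)² ψ⟩ − ⟨ψ, (H_f − H_i) ψ⟩²) and suppose σ_D > 0 and Δ > 0. If |δλ| < Δ / (2 σ_D), then the standard deviation of H(λ + δλ) in the state ψ satisfies sqrt(⟨ψ, H(λ+δλ)² ψ⟩ − ⟨ψ, H(λ+δλ) ψ⟩²) < Δ/2. -/

import Mathlib

open scoped InnerProductSpace

/-- The linear interpolation `H(λ) = (1 − λ)H_i + λH_f`. -/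
noncomputable def interpHam {V : Type*} [NormedAddCommGroup V] [InnerProductSpace ℂ V]
    (Hi Hf : V →L[ℂ] V) (t : ℝ) : V →L[ℂ] V :=
  ((1 - t : ℝ) : ℂ) • Hi + ((t : ℝ) : ℂ) • Hf

/-- The standard deviation `σ_ψ(A) = sqrt(⟨ψ, A²ψ⟩ − ⟨ψ, Aψ⟩²)` of a Hermitian
operator `A` in the state `ψ`. -/
noncomputable def quantumStdDev {V : Type*} [NormedAddCommGroup V] [InnerProductSpace ℂ V]
    (A : V →L[ℂ] V) (ψ : V) : ℝ :=
  Real.sqrt ((⟪ψ, (A * A) ψ⟫_ℂ).re - (⟪ψ, A ψ⟫_ℂ).re ^ 2)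

set_option maxHeartbeats 1000000 in
/-- Verification step-size bound: for the linear interpolation
`H(λ) = (1−λ)H_i + λH_f` and a unit eigenvector `ψ` of `H(λ)`, if
`σ_D = σ_ψ(H_f − H_i) > 0`, `Δ > 0` and `|δλ| < Δ/(2σ_D)`, then
`σ_ψ(H(λ+δλ)) < Δ/2`. -/
theorem verification_step_size_bound
    {V : Type*} [NormedAddCommGroup V] [InnerProductSpace ℂ V] [FiniteDimensional ℂ V]
    (Hi Hf : V →L[ℂ] V) (hHi : IsSelfAdjoint Hi) (hHf : IsSelfAdjoint Hf)
    (lam : ℝ) (ψ : V) (hψ : ‖ψ‖ = 1) (E : ℝ)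
    (heig : interpHam Hi Hf lam ψ = (E : ℂ) • ψ)
    (Δ : ℝ) (hΔ : 0 < Δ)
    (hσD : 0 < quantumStdDev (Hf - Hi) ψ)
    (dl : ℝ) (hdl : |dl| < Δ / (2 * quantumStdDev (Hf - Hi) ψ)) :
    quantumStdDev (interpHam Hi Hf (lam + dl)) ψ < Δ / 2 := by
  set D := Hf - Hi with hD
  set A := interpHam Hi Hf (lam + dl) with hAdef
  have hDsa : IsSelfAdjoint D := hHf.sub hHi
  have hsymm_mk : ∀ (a : ℝ), ((interpHam Hi Hf a : V →L[ℂ] V) : V →ₗ[ℂ] V).IsSymmetric := by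
    intro a x y
    have h1 := hHi.isSymmetric x y
    have h2 := hHf.isSymmetric x y
    simp only [ContinuousLinearMap.coe_coe] at h1 h2
    simp only [interpHam, ContinuousLinearMap.coe_coe, ContinuousLinearMap.add_apply,
      ContinuousLinearMap.smul_apply, inner_add_left, inner_add_right,
      inner_smul_left, inner_smul_right, Complex.conj_ofReal]
    rw [h1, h2]
  have hHlam : IsSelfAdjoint (interpHam Hi Hf lam) :=
    LinearMap.IsSymmetric.isSelfAdjoint (hsymm_mk lam)
  have hAsa : IsSelfAdjoint A :=
    LinearMap.IsSymmetric.isSelfAdjoint (hsymm_mk (lam + dl))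
  have hsplit : A = interpHam Hi Hf lam + ((dl:ℝ):ℂ) • D := by
    rw [hAdef]; unfold interpHam; rw [hD]; push_cast; module
  have hAψ : A ψ = (E : ℂ) • ψ + ((dl:ℝ):ℂ) • (D ψ) := by
    rw [hsplit]; simp [heig]
  have key : ∀ (T : V →L[ℂ] V), IsSelfAdjoint T → ⟪ψ, (T * T) ψ⟫_ℂ = ⟪T ψ, T ψ⟫_ℂ := by
    intro T hT
    have := ContinuousLinearMap.adjoint_inner_left T (T ψ) ψ
    rw [hT.adjoint_eq] at this
    simpa using this.symm
  have hψψ : ⟪ψ, ψ⟫_ℂ = 1 := by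
    rw [inner_self_eq_norm_sq_to_K, hψ]; norm_num
  set d : ℝ := (⟪ψ, D ψ⟫_ℂ).re with hdd
  set n : ℝ := (⟪D ψ, D ψ⟫_ℂ).re with hnn
  have h2 : ⟪D ψ, ψ⟫_ℂ = ⟪ψ, D ψ⟫_ℂ := by
    have h := ContinuousLinearMap.adjoint_inner_left D ψ ψ
    rw [hDsa.adjoint_eq] at h
    exact h
  have hconj : (starRingEnd ℂ) ⟪ψ, D ψ⟫_ℂ = ⟪ψ, D ψ⟫_ℂ := by
    rw [inner_conj_symm]; exact h2
  have hDψim : (⟪ψ, D ψ⟫_ℂ).im = 0 := (Complex.conj_eq_iff_im.mp hconj)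
  have hdc : ⟪ψ, D ψ⟫_ℂ = ((d:ℝ):ℂ) := Complex.ext (by simp [hdd]) (by simp [hDψim])
  have hnc : ⟪D ψ, D ψ⟫_ℂ = ((n:ℝ):ℂ) :=
    Complex.ext (by simp [hnn]) (by simpa using Complex.conj_eq_iff_im.mp (inner_conj_symm (D ψ) (D ψ)))
  -- expectation of A
  have hexpc : ⟪ψ, A ψ⟫_ℂ = (((E + dl * d : ℝ)) : ℂ) := by
    rw [hAψ, inner_add_right, inner_smul_right, inner_smul_right, hψψ, hdc]
    push_cast; ring
  have hexp : (⟪ψ, A ψ⟫_ℂ).re = E + dl * d := by rw [hexpc, Complex.ofReal_re]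
  -- second moment of A
  have hsqc : ⟪ψ, (A * A) ψ⟫_ℂ = (((E ^ 2 + 2 * E * dl * d + dl ^ 2 * n : ℝ)) : ℂ) := by
    rw [key A hAsa, hAψ]
    simp only [inner_add_left, inner_add_right, inner_smul_left, inner_smul_right,
      hψψ, h2, hdc, hnc, Complex.conj_ofReal]
    push_cast; ring
  have hsq : (⟪ψ, (A * A) ψ⟫_ℂ).re = E ^ 2 + 2 * E * dl * d + dl ^ 2 * n := by
    rw [hsqc, Complex.ofReal_re]
  have hDsq : (⟪ψ, (D * D) ψ⟫_ℂ).re = n := by rw [key D hDsa, hnn]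
  have hstd : quantumStdDev A ψ = |dl| * quantumStdDev D ψ := by
    unfold quantumStdDev
    rw [hexp, hsq, hDsq, ← hdd]
    have : E ^ 2 + 2 * E * dl * d + dl ^ 2 * n - (E + dl * d) ^ 2 = dl ^ 2 * (n - d ^ 2) := by
      ring
    rw [this, Real.sqrt_mul (sq_nonneg dl), Real.sqrt_sq_eq_abs]
  rw [hstd]
  calc |dl| * quantumStdDev D ψ
      < (Δ / (2 * quantumStdDev D ψ)) * quantumStdDev D ψ :=
        mul_lt_mul_of_pos_right hdl hσD
    _ = Δ / 2 := by field_simp
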